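/- Let a ≥ 2 and b ≥ 2, let v ∈ S_n have one-line notation (a+1, 1, a, a-1, ..., 3, 2, a+2, ..., n) (231-type) and u ∈ S_n have one-line notation (b, b+1, b-1, ..., 2, 1, b+2, ..., n) (312-type). Then v ≤ u in Bruhat order if and only if b ≥ a+1. -/

import Mathlib

/-!
A Bruhat step `w < w * (i j)` with `i < j` needs `w i < w j`, since undoing an ascent would lower
the inversion count; so the value in the first position only grows along a chain, and `v ≤ u`
forces `a + 1 = v 1 ≤ u 1 = b`. Conversely, `u` is decreasing on the positions `2, …, b + 1` and
`v` agrees with `u` at all other positions, after one ascent transposition of the positions `1`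
and `b` when `b > a + 1`. Bubble-sorting those positions into decreasing order by ascent
transpositions then climbs from `v` to `u`.

That an ascent transposition `(p q)` raises the inversion count is shown by an injection of
inversions: apply `(p q)` to both entries of a pair whenever this keeps the pair increasing.
-/
open Equiv Finset

/-- The simple transposition `s_i = (i, i+1)` (1-indexed letters), as a
permutation of `Fin n` (0-indexed letters `i-1`, `i`). -/
def sT (n : ℕ) [NeZero n] (i : ℕ) : Equiv.Perm (Fin n) :=
  Equiv.swap (Fin.ofNat n (i - 1 : ℕ)) (Fin.ofNat n (i : ℕ))

/-- The Bruhat length of a permutation: its number of inversions. -/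
def lenP (n : ℕ) (w : Equiv.Perm (Fin n)) : ℕ :=
  (Finset.univ.filter (fun p : Fin n × Fin n => p.1 < p.2 ∧ w p.2 < w p.1)).card

/-- Bruhat order on `S_n`: the reflexive-transitive closure of
"multiply on the right by a transposition and increase length". -/
def bruhatLE (n : ℕ) (u w : Equiv.Perm (Fin n)) : Prop :=
  Relation.ReflTransGen
    (fun a b => (∃ i j : Fin n, i ≠ j ∧ b = a * Equiv.swap i j) ∧ lenP n a < lenP n b) u w

/-- `u_ℓ(x) = s_{ℓ-1} s_{ℓ-2} ⋯ s_{ℓ-x_ℓ}` (identity if `x_ℓ = 0`). -/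
def uPerm (n : ℕ) [NeZero n] (ℓ m : ℕ) : Equiv.Perm (Fin n) :=
  ((List.range m).map (fun t => sT n (ℓ - 1 - t))).prod

/-- `ω(x) = u_2(x) u_3(x) ⋯ u_n(x)`. -/
def omegaPerm (n : ℕ) [NeZero n] (x : ℕ → ℕ) : Equiv.Perm (Fin n) :=
  ((List.range (n - 1)).map (fun k => uPerm n (k + 2) (x (k + 2)))).prod

/-- One-line notation (as a function of the 1-indexed position `i`) of the
312-type fixed point for the interval `[1, a]`:
`(a, a+1, a-1, a-2, …, 2, 1, a+2, a+3, …, n)`. -/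
def oneLine312 (a i : ℕ) : ℕ :=
  if i = 1 then a else if i = 2 then a + 1 else if i ≤ a + 1 then a + 2 - i else i

/-- One-line notation (as a function of the 1-indexed position `i`) of the
231-type fixed point for the interval `[1, a]`:
`(a+1, 1, a, a-1, …, 3, 2, a+2, …, n)`. -/
def oneLine231 (a i : ℕ) : ℕ :=
  if i = 1 then a + 1 else if i = 2 then 1 else if i ≤ a + 1 then a + 3 - i else i

/-- One-line notation (as a function of the 1-indexed position `i`) of the
longest element of the parabolic subgroup generated by `s_1, …, s_a`:
`(a+1, a, …, 2, 1, a+2, …, n)`. -/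
def oneLineInv (a i : ℕ) : ℕ := if i ≤ a + 1 then a + 2 - i else i

section Inversions

variable {α β : Type*} [LinearOrder α] [LinearOrder β]

def inversions [Fintype α] (f : α → β) : Finset (α × α) := {z | z.1 < z.2 ∧ f z.2 < f z.1}

def swapPair (p q : α) (z : α × α) : α × α :=
  if swap p q z.1 < swap p q z.2 then (swap p q z.1, swap p q z.2) else z

theorem swapPair_swapPair (p q : α) {z : α × α} (hz : z.1 < z.2) :
    swapPair p q (swapPair p q z) = z := by
  unfold swapPair
  split_ifs <;> simp_all

theorem swapPair_mem_inversions_comp_swap [Fintype α] (f : α → β) {p q : α} (hpq : p < q)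
    (hf : f p < f q) {z : α × α} (hz : z ∈ inversions f) :
    swapPair p q z ∈ (inversions (f ∘ swap p q)).erase (p, q) := by
  obtain ⟨s, t⟩ := z
  simp only [inversions, mem_filter, mem_univ, true_and] at hz
  obtain ⟨hst, hfst⟩ := hz
  simp only [swapPair, mem_erase, inversions, mem_filter, mem_univ, true_and,
    Function.comp_apply]
  split_ifs with h
  · refine ⟨?_, h, by simpa using hfst⟩
    intro hpair
    obtain ⟨hs, ht⟩ := Prod.mk.inj hpair
    rw [swap_apply_eq_iff, swap_apply_left] at hs
    rw [swap_apply_eq_iff, swap_apply_right] at ht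
    exact (hs ▸ ht ▸ hst).not_gt hpq
  · refine ⟨fun hpair => ?_, hst, ?_⟩
    · obtain ⟨rfl, rfl⟩ := Prod.mk.inj hpair
      exact lt_asymm hf hfst
    -- `swap p q` reverses the order of `s < t` only if `s = p, t < q` or `p < s, t = q`
    · by_cases hsp : s = p
      · subst hsp
        have htq : t ≠ q := by rintro rfl; exact lt_asymm hf hfst
        rw [swap_apply_left, swap_apply_of_ne_of_ne hst.ne' htq]
        exact hfst.trans hf
      have hsq : s ≠ q := by
        rintro rfl
        rw [swap_apply_right, swap_apply_of_ne_of_ne (hpq.trans hst).ne' hst.ne'] at h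
        exact h (hpq.trans hst)
      have htq : t = q := by
        by_contra htq
        by_cases htp : t = p
        · subst htp
          simp only [swap_apply_left, swap_apply_of_ne_of_ne hsp hsq] at h
          exact h (hst.trans hpq)
        · rw [swap_apply_of_ne_of_ne hsp hsq, swap_apply_of_ne_of_ne htp htq] at h
          exact h hst
      subst htq
      rw [swap_apply_right, swap_apply_of_ne_of_ne hsp hsq]
      exact hf.trans hfst

theorem card_inversions_lt_comp_swap [Fintype α] (f : α → β) {p q : α} (hpq : p < q)
    (hf : f p < f q) : #(inversions f) < #(inversions (f ∘ swap p q)) := by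
  have hmem : (p, q) ∈ inversions (f ∘ swap p q) := by
    simpa [inversions, hpq] using hf
  calc #(inversions f) ≤ #((inversions (f ∘ swap p q)).erase (p, q)) := by
        refine card_le_card_of_injOn (swapPair p q)
          (fun z hz => swapPair_mem_inversions_comp_swap f hpq hf hz) fun z hz z' hz' h => ?_
        simp only [inversions, coe_filter, mem_univ, true_and, Set.mem_ofPred_eq] at hz hz'
        rw [← swapPair_swapPair p q hz.1, h, swapPair_swapPair p q hz'.1]
    _ < #(inversions (f ∘ swap p q)) := card_erase_lt_of_mem hmem

end Inversions

theorem Equiv.eq_of_strictAntiOn_of_eqOn_compl {α β : Type*} [LinearOrder α] [Finite α]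
    [Preorder β] {P : Set α} {w u : α ≃ β} (hw : StrictAntiOn w P) (hu : StrictAntiOn u P)
    (hwu : Set.EqOn w u Pᶜ) : w = u := by
  have symm_mem : ∀ {w u : α ≃ β}, Set.EqOn w u Pᶜ → ∀ x ∈ P, u.symm (w x) ∈ P := by
    intro w u h x hx
    by_contra hx'
    rw [w.injective ((h hx').trans (u.apply_symm_apply _))] at hx'
    exact hx' hx
  have hrestrict : (fun x : P => w x) = fun x : P => u x := by
    refine (StrictAnti.range_inj (fun (x y : P) h => hw x.2 y.2 h)
      (fun (x y : P) h => hu x.2 y.2 h)).mp ?_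
    ext y
    constructor
    · rintro ⟨x, rfl⟩
      exact ⟨⟨_, symm_mem hwu x x.2⟩, u.apply_symm_apply _⟩
    · rintro ⟨x, rfl⟩
      exact ⟨⟨_, symm_mem hwu.symm x x.2⟩, w.apply_symm_apply _⟩
  ext x
  by_cases hx : x ∈ P
  · exact congrFun hrestrict ⟨x, hx⟩
  · rw [hwu hx]

section Bruhat

variable {n : ℕ}

theorem lenP_lt_lenP_mul_swap {w : Perm (Fin n)} {i j : Fin n} (hij : i < j) (h : w i < w j) :
    lenP n w < lenP n (w * swap i j) :=
  card_inversions_lt_comp_swap w hij h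

theorem bruhatLE_mul_swap {w : Perm (Fin n)} {i j : Fin n} (hij : i < j) (h : w i < w j) :
    bruhatLE n w (w * swap i j) :=
  .single ⟨⟨i, j, hij.ne, rfl⟩, lenP_lt_lenP_mul_swap hij h⟩

theorem lt_of_lenP_lt_lenP_mul_swap {w : Perm (Fin n)} {i j : Fin n} (hij : i < j)
    (h : lenP n w < lenP n (w * swap i j)) : w i < w j := by
  by_contra! hle
  have hlt : (w * swap i j) i < (w * swap i j) j := by
    simpa using hle.lt_of_ne (w.injective.ne hij.ne')
  have := lenP_lt_lenP_mul_swap hij hlt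
  rw [mul_swap_mul_self] at this
  omega

theorem apply_zero_le_mul_swap [NeZero n] {w : Perm (Fin n)} {i j : Fin n} (hij : i ≠ j)
    (h : lenP n w < lenP n (w * swap i j)) : w 0 ≤ (w * swap i j) 0 := by
  wlog hlt : i < j generalizing i j
  · rw [swap_comm] at h ⊢
    exact this hij.symm h (hij.lt_or_gt.resolve_left hlt)
  have hj : (0 : Fin n) ≠ j := (Fin.zero_le i).trans_lt hlt |>.ne
  rcases eq_or_ne 0 i with rfl | hi
  · simpa using (lt_of_lenP_lt_lenP_mul_swap hlt h).le
  · simp [swap_apply_of_ne_of_ne hi hj]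

theorem apply_zero_le_of_bruhatLE [NeZero n] {v w : Perm (Fin n)} (h : bruhatLE n v w) :
    v 0 ≤ w 0 := by
  induction h with
  | refl => exact le_rfl
  | tail _ hstep ih =>
    obtain ⟨⟨i, j, hij, rfl⟩, hlen⟩ := hstep
    exact ih.trans (apply_zero_le_mul_swap hij hlen)

theorem lenP_le (w : Perm (Fin n)) : lenP n w ≤ n * n := by
  calc lenP n w ≤ #(univ : Finset (Fin n × Fin n)) := card_filter_le _ _
    _ = n * n := by simp

/-- Bubble sort inside `P`: every ascent transposition raises the length. -/
theorem bruhatLE_of_eqOn_compl {P : Set (Fin n)} {w u : Perm (Fin n)} (hu : StrictAntiOn u P)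
    (hwu : Set.EqOn w u Pᶜ) : bruhatLE n w u := by
  by_cases hasc : ∃ s ∈ P, ∃ t ∈ P, s < t ∧ w s < w t
  · obtain ⟨s, hs, t, ht, hst, hw⟩ := hasc
    have hlen := lenP_lt_lenP_mul_swap hst hw
    refine .head ⟨⟨s, t, hst.ne, rfl⟩, hlen⟩ (bruhatLE_of_eqOn_compl hu fun x hx => ?_)
    have hxs : x ≠ s := by rintro rfl; exact hx hs
    have hxt : x ≠ t := by rintro rfl; exact hx ht
    simpa [swap_apply_of_ne_of_ne hxs hxt] using hwu hx
  · push Not at hasc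
    have hw : StrictAntiOn w P := fun s hs t ht hst =>
      (hasc s hs t ht hst).lt_of_ne (w.injective.ne hst.ne')
    rw [Equiv.eq_of_strictAntiOn_of_eqOn_compl hw hu hwu]
    exact .refl
termination_by n * n - lenP n w
decreasing_by have := lenP_le (w * swap s t); omega

end Bruhat

section OneLine

variable {n a : ℕ} {w : Perm (Fin n)}

theorem val_apply_zero_of_oneLine231 [NeZero n]
    (hw : ∀ i : Fin n, (w i : ℕ) + 1 = oneLine231 a (i + 1)) : (w 0 : ℕ) = a := by
  simpa [oneLine231] using hw 0

theorem apply_eq_self_of_oneLine231 (ha : 1 ≤ a)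
    (hw : ∀ i : Fin n, (w i : ℕ) + 1 = oneLine231 a (i + 1)) {x : Fin n} (hx : a < x) :
    w x = x := by
  have := hw x
  simp only [oneLine231] at this
  split_ifs at this <;> ext <;> omega

theorem val_apply_zero_of_oneLine312 [NeZero n]
    (hw : ∀ i : Fin n, (w i : ℕ) + 1 = oneLine312 a (i + 1)) : (w 0 : ℕ) + 1 = a := by
  simpa [oneLine312] using hw 0

theorem apply_eq_self_of_oneLine312 (ha : 1 ≤ a)
    (hw : ∀ i : Fin n, (w i : ℕ) + 1 = oneLine312 a (i + 1)) {x : Fin n} (hx : a < x) :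
    w x = x := by
  have := hw x
  simp only [oneLine312] at this
  split_ifs at this <;> ext <;> omega

theorem strictAntiOn_of_oneLine312 (hw : ∀ i : Fin n, (w i : ℕ) + 1 = oneLine312 a (i + 1)) :
    StrictAntiOn w {x | 1 ≤ (x : ℕ) ∧ (x : ℕ) ≤ a} := fun s ⟨hs1, hsa⟩ t ⟨ht1, hta⟩ hst => by
  have hws := hw s
  have hwt := hw t
  simp only [oneLine312] at hws hwt
  rw [Fin.lt_def] at hst ⊢
  split_ifs at hws hwt <;> omega

end OneLine

theorem bruhatLE_of_oneLine231_of_oneLine312 {n a b : ℕ} [NeZero n] (ha : 1 ≤ a)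
    (hab : a + 1 ≤ b) {v u : Perm (Fin n)} (hv : ∀ i : Fin n, (v i : ℕ) + 1 = oneLine231 a (i + 1))
    (hu : ∀ i : Fin n, (u i : ℕ) + 1 = oneLine312 b (i + 1)) : bruhatLE n v u := by
  set P : Set (Fin n) := {x | 1 ≤ (x : ℕ) ∧ (x : ℕ) ≤ b}
  have hv0 := val_apply_zero_of_oneLine231 hv
  have hu0 := val_apply_zero_of_oneLine312 hu
  have hcompl : ∀ x ∉ P, x = 0 ∨ b < (x : ℕ) := fun x hx => by
    simp only [P, Set.mem_ofPred_eq, not_and, not_le] at hx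
    rw [Fin.ext_iff, Fin.val_zero]
    omega
  have hfix : ∀ x : Fin n, b < x → v x = u x := fun x hx => by
    rw [apply_eq_self_of_oneLine231 ha hv (by omega), apply_eq_self_of_oneLine312 (by omega) hu hx]
  obtain ⟨w, hvw, hwu⟩ : ∃ w, bruhatLE n v w ∧ Set.EqOn w u Pᶜ := by
    rcases hab.eq_or_lt with rfl | hlt
    · refine ⟨v, .refl, fun x hx => ?_⟩
      rcases hcompl x hx with rfl | hx
      · ext; omega
      · exact hfix x hx
    let j : Fin n := ⟨b - 1, by have := (u 0).isLt; omega⟩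
    have hvj : v j = j := apply_eq_self_of_oneLine231 ha hv (by simp only [j]; omega)
    have hj0 : (0 : Fin n) < j := by rw [Fin.lt_def]; simp only [j, Fin.val_zero]; omega
    have hv0j : v 0 < v j := by rw [hvj, Fin.lt_def]; simp only [j]; omega
    refine ⟨v * swap 0 j, bruhatLE_mul_swap hj0 hv0j, fun x hx => ?_⟩
    rcases hcompl x hx with rfl | hx
    · ext; simp only [Perm.mul_apply, swap_apply_left, hvj, j]; omega
    · have hxj : x ≠ j := by rw [Ne, Fin.ext_iff]; simp only [j]; omega
      have hx0 : x ≠ 0 := by rw [Ne, Fin.ext_iff, Fin.val_zero]; omega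
      rw [Perm.mul_apply, swap_apply_of_ne_of_ne hx0 hxj, hfix x hx]
  exact hvw.trans (bruhatLE_of_eqOn_compl (strictAntiOn_of_oneLine312 hu) hwu)

theorem stmt16_general (n a b : ℕ) [NeZero n] (ha : 2 ≤ a)
    (v u : Equiv.Perm (Fin n))
    (hv : ∀ i : Fin n, (v i : ℕ) + 1 = oneLine231 a ((i : ℕ) + 1))
    (hu : ∀ i : Fin n, (u i : ℕ) + 1 = oneLine312 b ((i : ℕ) + 1)) :
    bruhatLE n v u ↔ a + 1 ≤ b := by
  refine ⟨fun h => ?_, fun hab => bruhatLE_of_oneLine231_of_oneLine312 (by omega) hab hv hu⟩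
  have h0 := Fin.le_def.mp (apply_zero_le_of_bruhatLE h)
  have := val_apply_zero_of_oneLine231 hv
  have := val_apply_zero_of_oneLine312 hu
  omega

/-- Let `v` be the 231-type permutation with one-line notation
`(a+1, 1, a, a-1, …, 3, 2, a+2, …, n)` and `u` the 312-type permutation with
one-line notation `(b, b+1, b-1, …, 2, 1, b+2, …, n)`.  Then `v ≤ u` in Bruhat
order iff `b ≥ a + 1`. -/
theorem stmt16 (n a b : ℕ) [NeZero n] (ha : 2 ≤ a) (hb : 2 ≤ b)
    (han : a + 1 ≤ n) (hbn : b + 1 ≤ n) (v u : Equiv.Perm (Fin n))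
    (hv : ∀ i : Fin n, (v i : ℕ) + 1 = oneLine231 a ((i : ℕ) + 1))
    (hu : ∀ i : Fin n, (u i : ℕ) + 1 = oneLine312 b ((i : ℕ) + 1)) :
    bruhatLE n v u ↔ a + 1 ≤ b :=
  stmt16_general n a b ha v u hv hu
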